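/- Let (Y_i)_{i∈I} be a cofiltered inverse system of compact Hausdorff spaces with limit Y = lim_i Y_i. Then the natural continuous map π₀(Y) → lim_i π₀(Y_i) is a homeomorphism, i.e. the connected-components functor commutes with cofiltered limits of compact Hausdorff spaces. -/

import Mathlib

/-!
For a compatible family of closed connected sets `A i ⊆ F.obj i`, the sections of `F` through
the `A i` are the intersection of the directed family of compact sets of partial sections over
finite subdiagrams. Given such a subdiagram with a cone point `k` over it, overwriting the
coordinates of the subdiagram by the images of the coordinate at `k` maps the connected set
`∏ A i` into the partial sections, and fixes every section. A directed intersection of compact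
sets, each of which contains a preconnected set containing the intersection, is preconnected;
so the sections through the `A i` are nonempty (by compactness) and connected.

Taking for `A i` the components of the images of a point of the limit gives injectivity of
`π₀(lim Y_i) → ∏ π₀(Y_i)`, and taking the components of a compatible family gives
surjectivity onto the compatible families. As `lim Y_i` is compact and `∏ π₀(Y_i)` Hausdorff,
the map is a closed embedding.
-/

set_option linter.unusedVariables false

open CategoryTheory Limits

/-- The canonical map `π₀(lim Y_i) → ∏ π₀(Y_i)` induced by the projections of a cone. -/
def pi0ConeMap {I : Type*} [Category I] (F : I ⥤ TopCat) (c : Cone F) :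
    ConnectedComponents c.pt → ((i : I) → ConnectedComponents (F.obj i)) :=
  fun z i => (c.π.app i).hom.continuous.connectedComponentsMap z

open Topology Set

theorem isPreconnected_iInter_of_directed {X ι : Type*} [TopologicalSpace X] [T2Space X]
    [Nonempty ι] {L : ι → Set X} (hdir : Directed (· ⊇ ·) L) (hL : ∀ i, IsCompact (L i))
    (hM : ∀ i, ∃ M, IsPreconnected M ∧ ⋂ j, L j ⊆ M ∧ M ⊆ L i) :
    IsPreconnected (⋂ i, L i) := by
  set T := ⋂ i, L i
  have hTcl : IsClosed T := isClosed_iInter fun i => (hL i).isClosed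
  have hT : IsCompact T := (hL (Classical.arbitrary ι)).of_isClosed_subset hTcl (iInter_subset _ _)
  rw [isPreconnected_iff_subset_of_fully_disjoint_closed hTcl]
  intro a b ha hb hTab hab
  obtain ⟨U, V, hU, hV, haU, hbV, hUV⟩ := SeparatedNhds.of_isCompact_isCompact
    (hT.inter_right ha) (hT.inter_right hb) (hab.mono inter_subset_right inter_subset_right)
  have hTUV : T ⊆ U ∪ V := fun x hx =>
    (hTab hx).imp (fun hxa => haU ⟨hx, hxa⟩) (fun hxb => hbV ⟨hx, hxb⟩)
  obtain ⟨i, hi⟩ := exists_subset_nhds_of_isCompact hdir hL fun x hx =>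
    (hU.union hV).mem_nhds (hTUV hx)
  obtain ⟨M, hMconn, hTM, hML⟩ := hM i
  refine (hMconn.subset_or_subset hU hV hUV (hML.trans hi)).imp (fun hMU x hx => ?_)
    (fun hMV x hx => ?_)
  · exact (hTab hx).resolve_right fun hxb =>
      disjoint_left.mp hUV (hMU (hTM hx)) (hbV ⟨hx, hxb⟩)
  · exact (hTab hx).resolve_left fun hxa =>
      disjoint_left.mp hUV (haU ⟨hx, hxa⟩) (hMV (hTM hx))

namespace TopCat

variable {I : Type*} [Category I] {F : I ⥤ TopCat}

abbrev DiagramArrow (G : Finset I) := Σ' (X Y : I) (_ : X ∈ G) (_ : Y ∈ G), X ⟶ Y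

abbrev FiniteDiagram (I : Type*) [Category I] := Σ G : Finset I, Finset (DiagramArrow G)

variable (F) in
def sectionsIn (A : ∀ i, Set (F.obj i)) : Set (∀ i, F.obj i) :=
  {v | (∀ i, v i ∈ A i) ∧ ∀ ⦃i j : I⦄ (f : i ⟶ j), F.map f (v i) = v j}

variable (F) in
def partialSectionsIn (A : ∀ i, Set (F.obj i)) (D : FiniteDiagram I) : Set (∀ i, F.obj i) :=
  {v | (∀ i, v i ∈ A i) ∧ ∀ g ∈ D.2, F.map g.2.2.2.2 (v g.1) = v g.2.1}

theorem iInter_partialSectionsIn (A : ∀ i, Set (F.obj i)) :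
    ⋂ D, partialSectionsIn F A D = sectionsIn F A := by
  classical
  ext v
  simp only [mem_iInter]
  refine ⟨fun hv => ⟨(hv ⟨∅, ∅⟩).1, fun i j f => ?_⟩, fun hv D => ⟨hv.1, fun g _ => hv.2 _⟩⟩
  exact (hv ⟨{i, j}, {⟨i, j, by simp, by simp, f⟩}⟩).2 _ (Finset.mem_singleton_self _)

theorem directed_partialSectionsIn (A : ∀ i, Set (F.obj i)) :
    Directed (· ⊇ ·) (partialSectionsIn F A) := by
  classical
  intro D₁ D₂
  let ι₁ : DiagramArrow D₁.1 → DiagramArrow (D₁.1 ∪ D₂.1) := fun g =>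
    ⟨g.1, g.2.1, Finset.mem_union_left _ g.2.2.1, Finset.mem_union_left _ g.2.2.2.1, g.2.2.2.2⟩
  let ι₂ : DiagramArrow D₂.1 → DiagramArrow (D₁.1 ∪ D₂.1) := fun g =>
    ⟨g.1, g.2.1, Finset.mem_union_right _ g.2.2.1, Finset.mem_union_right _ g.2.2.2.1, g.2.2.2.2⟩
  refine ⟨⟨D₁.1 ∪ D₂.1, D₁.2.image ι₁ ∪ D₂.2.image ι₂⟩, ?_, ?_⟩
  · exact fun v hv => ⟨hv.1, fun g hg =>
      hv.2 (ι₁ g) (Finset.mem_union_left _ (Finset.mem_image_of_mem _ hg))⟩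
  · exact fun v hv => ⟨hv.1, fun g hg =>
      hv.2 (ι₂ g) (Finset.mem_union_right _ (Finset.mem_image_of_mem _ hg))⟩

theorem isClosed_partialSectionsIn [∀ i, T2Space (F.obj i)] {A : ∀ i, Set (F.obj i)}
    (hA : ∀ i, IsClosed (A i)) (D : FiniteDiagram I) : IsClosed (partialSectionsIn F A D) := by
  have : partialSectionsIn F A D = univ.pi A ∩
      ⋂ g ∈ D.2, {v : ∀ i, F.obj i | F.map g.2.2.2.2 (v g.1) = v g.2.1} := by
    ext v
    simp [partialSectionsIn]
  rw [this]
  exact (isClosed_set_pi fun i _ => hA i).inter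
    (isClosed_biInter fun g _ => isClosed_eq (by fun_prop) (by fun_prop))

theorem isClosed_sectionsIn [∀ i, T2Space (F.obj i)] {A : ∀ i, Set (F.obj i)}
    (hcl : ∀ i, IsClosed (A i)) : IsClosed (sectionsIn F A) := by
  rw [← iInter_partialSectionsIn]
  exact isClosed_iInter (isClosed_partialSectionsIn hcl)

variable (F) in
open Classical in
noncomputable def spreadFromInf [IsCofiltered I] (D : FiniteDiagram I) (w : ∀ i, F.obj i) :
    ∀ i, F.obj i :=
  fun j => if h : j ∈ D.1 then F.map (IsCofiltered.infTo D.1 D.2 h)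
    (w (IsCofiltered.inf D.1 D.2)) else w j

theorem continuous_spreadFromInf [IsCofiltered I] (D : FiniteDiagram I) :
    Continuous (spreadFromInf F D) := by
  refine continuous_pi fun j => ?_
  unfold spreadFromInf
  split_ifs <;> fun_prop

theorem spreadFromInf_of_mem_sections [IsCofiltered I] (D : FiniteDiagram I)
    {v : ∀ i, F.obj i} (hv : ∀ ⦃i j : I⦄ (f : i ⟶ j), F.map f (v i) = v j) :
    spreadFromInf F D v = v := by
  funext j
  unfold spreadFromInf
  split_ifs
  exacts [hv _, rfl]

theorem mapsTo_spreadFromInf [IsCofiltered I] {A : ∀ i, Set (F.obj i)}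
    (hA : ∀ ⦃i j : I⦄ (f : i ⟶ j), MapsTo (F.map f) (A i) (A j)) (D : FiniteDiagram I) :
    MapsTo (spreadFromInf F D) (univ.pi A) (partialSectionsIn F A D) := by
  intro w hw
  refine ⟨fun j => ?_, fun ⟨X, Y, hX, hY, f⟩ hf => ?_⟩
  · unfold spreadFromInf
    split_ifs
    exacts [hA _ (hw _ (mem_univ _)), hw j (mem_univ _)]
  · simp only [spreadFromInf, dif_pos hX, dif_pos hY]
    rw [← ConcreteCategory.comp_apply, ← F.map_comp, IsCofiltered.infTo_commutes _ _ hX hY hf]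

section Cofiltered

variable [IsCofiltered I] [∀ i, CompactSpace (F.obj i)] [∀ i, T2Space (F.obj i)]
  {A : ∀ i, Set (F.obj i)}

theorem nonempty_sectionsIn (hne : ∀ i, (A i).Nonempty) (hcl : ∀ i, IsClosed (A i))
    (hA : ∀ ⦃i j : I⦄ (f : i ⟶ j), MapsTo (F.map f) (A i) (A j)) :
    (sectionsIn F A).Nonempty := by
  rw [← iInter_partialSectionsIn]
  refine IsCompact.nonempty_iInter_of_directed_nonempty_isCompact_isClosed _
    (directed_partialSectionsIn A) (fun D => ?_)
    (fun D => (isClosed_partialSectionsIn hcl D).isCompact) (isClosed_partialSectionsIn hcl)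
  exact ((univ_pi_nonempty_iff.mpr hne).image _).mono (mapsTo_spreadFromInf hA D).image_subset

theorem isPreconnected_sectionsIn (hcl : ∀ i, IsClosed (A i))
    (hconn : ∀ i, IsPreconnected (A i))
    (hA : ∀ ⦃i j : I⦄ (f : i ⟶ j), MapsTo (F.map f) (A i) (A j)) :
    IsPreconnected (sectionsIn F A) := by
  rw [← iInter_partialSectionsIn]
  refine isPreconnected_iInter_of_directed (directed_partialSectionsIn A)
    (fun D => (isClosed_partialSectionsIn hcl D).isCompact) fun D => ?_
  refine ⟨spreadFromInf F D '' univ.pi A,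
    (isPreconnected_univ_pi hconn).image _ (continuous_spreadFromInf D).continuousOn,
    fun v hv => ?_, (mapsTo_spreadFromInf hA D).image_subset⟩
  rw [iInter_partialSectionsIn] at hv
  exact ⟨v, fun i _ => hv.1 i, spreadFromInf_of_mem_sections D hv.2⟩

end Cofiltered

theorem isInducing_cone_π {c : Cone F} (hc : IsLimit c) :
    IsInducing fun (z : c.pt) (i : I) => c.π.app i z := by
  rw [isInducing_iff, induced_to_pi]
  exact induced_of_isLimit c hc

theorem range_cone_π {c : Cone F} (hc : IsLimit c) :
    range (fun (z : c.pt) (i : I) => c.π.app i z) = sectionsIn F fun _ => univ := by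
  have hc' := isLimitOfPreserves (forget TopCat) hc
  ext v
  refine ⟨?_, fun hv => ⟨(Types.isLimitEquivSections hc').symm ⟨v, fun f => hv.2 f⟩,
    funext fun i => Types.isLimitEquivSections_symm_apply hc' ⟨v, _⟩ i⟩⟩
  rintro ⟨z, rfl⟩
  exact ⟨fun _ => mem_univ _, fun i j f => c.w_apply f z⟩

theorem compactSpace_of_isLimit [∀ i, CompactSpace (F.obj i)] [∀ i, T2Space (F.obj i)]
    {c : Cone F} (hc : IsLimit c) : CompactSpace c.pt := by
  refine ⟨(isInducing_cone_π hc).isCompact_iff.mpr ?_⟩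
  rw [image_univ, range_cone_π hc]
  exact (isClosed_sectionsIn fun _ => isClosed_univ).isCompact

theorem mapsTo_connectedComponent {x : ∀ i, F.obj i}
    (hx : ∀ ⦃i j : I⦄ (f : i ⟶ j), F.map f (x i) ∈ connectedComponent (x j)) ⦃i j : I⦄
    (f : i ⟶ j) : MapsTo (F.map f) (connectedComponent (x i)) (connectedComponent (x j)) := by
  rw [connectedComponent_eq (hx f)]
  exact mapsTo_iff_image_subset.mpr ((F.map f).hom.continuous.image_connectedComponent_subset _)

variable [IsCofiltered I] [∀ i, CompactSpace (F.obj i)] [∀ i, T2Space (F.obj i)]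

theorem pi0ConeMap_injective {c : Cone F} (hc : IsLimit c) :
    Function.Injective (pi0ConeMap F c) := by
  refine ConnectedComponents.surjective_coe.forall₂.2 fun y y' h => ?_
  set e := fun (z : c.pt) (i : I) => c.π.app i z
  set S := sectionsIn F fun i => connectedComponent (c.π.app i y')
  have hS : IsPreconnected (e ⁻¹' S) := by
    have hSe : S ⊆ range e := range_cone_π hc ▸ fun v hv => ⟨fun _ => mem_univ _, hv.2⟩
    rw [← (isInducing_cone_π hc).isPreconnected_image, image_preimage_eq_of_subset hSe]
    refine isPreconnected_sectionsIn (fun _ => isClosed_connectedComponent)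
      (fun _ => isPreconnected_connectedComponent) (mapsTo_connectedComponent fun i j f => ?_)
    rw [c.w_apply]
    exact mem_connectedComponent
  have hmem : ∀ z, (∀ i, c.π.app i z ∈ connectedComponent (c.π.app i y')) → z ∈ e ⁻¹' S :=
    fun z hz => ⟨hz, fun i j f => c.w_apply f z⟩
  have hy : y ∈ e ⁻¹' S := hmem y fun i => ConnectedComponents.coe_eq_coe'.mp (congrFun h i)
  have hy' : y' ∈ e ⁻¹' S := hmem y' fun i => mem_connectedComponent
  exact ConnectedComponents.coe_eq_coe'.mpr (hS.subset_connectedComponent hy' hy)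

theorem range_pi0ConeMap {c : Cone F} (hc : IsLimit c) :
    range (pi0ConeMap F c) = {u : (i : I) → ConnectedComponents (F.obj i) |
      ∀ (i j : I) (f : i ⟶ j), (F.map f).hom.continuous.connectedComponentsMap (u i) = u j} := by
  refine subset_antisymm ?_ fun u hu => ?_
  · rintro _ ⟨z, rfl⟩ i j f
    obtain ⟨y, rfl⟩ := ConnectedComponents.surjective_coe z
    exact congrArg ConnectedComponents.mk (c.w_apply f y)
  choose x hx using fun i => ConnectedComponents.surjective_coe (u i)
  obtain ⟨v, hv⟩ := nonempty_sectionsIn (A := fun i => connectedComponent (x i))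
    (fun _ => ⟨_, mem_connectedComponent⟩) (fun _ => isClosed_connectedComponent)
    (mapsTo_connectedComponent fun i j f => ConnectedComponents.coe_eq_coe'.mp
      (by rw [← (F.map f).hom.continuous.connectedComponentsMap_mk, hx, hx, hu]))
  obtain ⟨z, rfl⟩ : v ∈ range fun (z : c.pt) (i : I) => c.π.app i z :=
    range_cone_π hc ▸ ⟨fun _ => mem_univ _, hv.2⟩
  exact ⟨.mk z, funext fun i => (ConnectedComponents.coe_eq_coe'.mpr (hv.1 i)).trans (hx i)⟩

end TopCat

/-- For a cofiltered inverse system of compact Hausdorff spaces with limit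
`Y = lim_i Y_i`, the natural continuous map `π₀(Y) → lim_i π₀(Y_i)` is a homeomorphism:
the canonical map from `π₀(Y)` to the product of the `π₀(Y_i)` is a topological embedding
whose range is exactly the subspace of compatible families, i.e. the topological limit
`lim_i π₀(Y_i)`. -/
theorem connectedComponents_commutes_with_cofiltered_limits
    {I : Type*} [Category I] [IsCofiltered I] (F : I ⥤ TopCat)
    (hcompact : ∀ i, CompactSpace (F.obj i))
    (ht2 : ∀ i, T2Space (F.obj i))
    (c : Cone F) (hc : IsLimit c) :
    Topology.IsEmbedding (pi0ConeMap F c) ∧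
    Set.range (pi0ConeMap F c) =
      {u : (i : I) → ConnectedComponents (F.obj i) |
        ∀ (i j : I) (f : i ⟶ j), (F.map f).hom.continuous.connectedComponentsMap (u i) = u j} := by
  have := TopCat.compactSpace_of_isLimit hc
  have hcont : Continuous (pi0ConeMap F c) :=
    continuous_pi fun i => (c.π.app i).hom.continuous.connectedComponentsMap_continuous
  exact ⟨(hcont.isClosedEmbedding (TopCat.pi0ConeMap_injective hc)).isEmbedding,
    TopCat.range_pi0ConeMap hc⟩
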